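/- Let G be a 2-sum of connected multigraphs K and H along a two-element vertex set U, and let x, y be real numbers with (x−1)(y−1) = 1. Then T(G;x,y) = (y−1) · T(K;x,y) · T(H;x,y), and also T(G;x,y) = (x−1) · T(K/A;x,y) · T(H/A;x,y), where A ∈ Γ(U) is the one-block partition {U}. -/

import Mathlib

attribute [local instance] Classical.propDecidable

/-- A multigraph: a finite vertex type, a finite edge index type, and an endpoint
map sending each edge to an unordered pair of vertices. -/
structure Multigraph where
  V : Type
  E : Type
  [finV : Fintype V]
  [finE : Fintype E]
  ends : E → Sym2 V

attribute [instance] Multigraph.finV Multigraph.finE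

namespace Multigraph

/-- Two vertices are related if some edge of `S` has them as its endpoints. -/
def rel (G : Multigraph) (S : Finset G.E) (v w : G.V) : Prop :=
  ∃ e ∈ S, G.ends e = s(v, w)

/-- `ω(S)`: the number of connected components of the spanning subgraph `(V(G), S)`. -/
noncomputable def omega (G : Multigraph) (S : Finset G.E) : ℕ :=
  Nat.card (Quotient (Relation.EqvGen.setoid (G.rel S)))

/-- `ω(G)`: the number of connected components of `G`. -/
noncomputable def omegaG (G : Multigraph) : ℕ :=
  G.omega Finset.univ

/-- The Negami polynomial `f(G;t,x,y)`. -/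
noncomputable def negami (G : Multigraph) (t x y : ℝ) : ℝ :=
  ∑ S : Finset G.E, t ^ G.omega S * x ^ S.card * y ^ (Fintype.card G.E - S.card)

/-- The Tutte polynomial `T(G;x,y)`. -/
noncomputable def tutte (G : Multigraph) (x y : ℝ) : ℝ :=
  ∑ S : Finset G.E,
    (x - 1) ^ (G.omega S - G.omegaG) *
      (y - 1) ^ (G.omega S + S.card - Fintype.card G.V)

end Multigraph

/-- The setoid on `V` extending a setoid `A` on the subset `U`: its nontrivial
classes are exactly the blocks of `A`. -/
def extendSetoid {V : Type} (U : Set V) (A : Setoid U) : Setoid V where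
  r v w := v = w ∨ ∃ (hv : v ∈ U) (hw : w ∈ U), A.r ⟨v, hv⟩ ⟨w, hw⟩
  iseqv := by
    constructor
    · exact fun v => Or.inl rfl
    · rintro v w (rfl | ⟨hv, hw, h⟩)
      · exact Or.inl rfl
      · exact Or.inr ⟨hw, hv, A.symm h⟩
    · rintro v w z (rfl | ⟨hv, hw, h⟩) (rfl | ⟨hw', hz, h'⟩)
      · exact Or.inl rfl
      · exact Or.inr ⟨hw', hz, h'⟩
      · exact Or.inr ⟨hv, hw, h⟩
      · exact Or.inr ⟨hv, hz, A.trans h h'⟩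

namespace Multigraph

/-- The contraction `K/A` of a multigraph `K` by a partition `A` of a subset `U` of
its vertices: all vertices in a common block of `A` are identified. -/
noncomputable def contract (K : Multigraph) {U : Set K.V} (A : Setoid U) : Multigraph where
  V := Quotient (extendSetoid U A)
  E := K.E
  finV := Fintype.ofFinite _
  finE := K.finE
  ends e := (K.ends e).map (Quotient.mk (extendSetoid U A))

/-- `P(S)`: the partition of `U` in which two vertices lie in the same block iff they
lie in the same connected component of the spanning subgraph `(V(K), S)`. -/
def part (K : Multigraph) (U : Set K.V) (S : Finset K.E) : Setoid U :=
  Setoid.comap Subtype.val (Relation.EqvGen.setoid (K.rel S))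

/-- The auxiliary Negami polynomial `f_A(K;t,x,y)`. -/
noncomputable def negamiAux (K : Multigraph) (U : Set K.V) (A : Setoid U) (t x y : ℝ) : ℝ :=
  ∑ S : Finset K.E,
    if K.part U S = A then
      t ^ (K.omega S - Nat.card (Quotient A)) * x ^ S.card *
        y ^ (Fintype.card K.E - S.card)
    else 0

/-- The auxiliary Tutte polynomial `T_A(K;x,y)`. -/
noncomputable def tutteAux (K : Multigraph) (U : Set K.V) (A : Setoid U) (x y : ℝ) : ℝ :=
  ∑ S : Finset K.E,
    if K.part U S = A then
      (x - 1) ^ (K.omega S - Nat.card (Quotient A)) *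
        (y - 1) ^ (K.omega S + S.card - Fintype.card K.V)
    else 0

end Multigraph

/-- The set of partitions of a finite type is finite. -/
instance setoidFinite {α : Type} [Finite α] : Finite (Setoid α) :=
  Finite.of_injective (fun s : Setoid α => s.r) fun a b h => by
    cases a; cases b; simp only at h; subst h; rfl

noncomputable instance setoidFintype {α : Type} [Finite α] : Fintype (Setoid α) :=
  Fintype.ofFinite _

/-- The number of blocks `|A|` of a partition (setoid) `A`. -/
noncomputable def nblocks {α : Type} (A : Setoid α) : ℕ :=
  Nat.card (Quotient A)

/-- The matrix `T_n(t)` indexed by partitions of `α`, with `(A,B)`-entry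
`t^{|A∧B|}` where `A∧B` is the finest common coarsening (the join `A ⊔ B`). -/
noncomputable def Tmat (α : Type) [Finite α] (t : ℝ) :
    Matrix (Setoid α) (Setoid α) ℝ :=
  Matrix.of fun A B => t ^ nblocks (A ⊔ B)

/-- The matrix `L_n(x)` indexed by partitions of `α`, with `(A,B)`-entry
`(x-1)^{|A∧B|-1}` if `|A∧B| + n = |A| + |B|` and `0` otherwise. -/
noncomputable def Lmat (α : Type) [Finite α] (n : ℕ) (x : ℝ) :
    Matrix (Setoid α) (Setoid α) ℝ :=
  Matrix.of fun A B =>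
    if nblocks (A ⊔ B) + n = nblocks A + nblocks B then
      (x - 1) ^ (nblocks (A ⊔ B) - 1)
    else 0

/-- The connectivity matrix `A_n` indexed by partitions of `α`, with `(A,B)`-entry
`1` if `|A∧B| = 1` and `0` otherwise. -/
noncomputable def Amat (α : Type) [Finite α] :
    Matrix (Setoid α) (Setoid α) ℝ :=
  Matrix.of fun A B => if nblocks (A ⊔ B) = 1 then (1 : ℝ) else 0

/-- `G` is an `n`-sum of `K` and `H` along `U`: `V(G) = V(K) ∪ V(H)`,
`V(K) ∩ V(H) = U`, and `E(G)` is the disjoint union of `E(K)` and `E(H)` with the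
inherited endpoint maps. -/
structure NSum (G K H : Multigraph) (U : Set G.V) where
  ιK : K.V → G.V
  ιH : H.V → G.V
  injK : Function.Injective ιK
  injH : Function.Injective ιH
  cover : Set.range ιK ∪ Set.range ιH = Set.univ
  inter : Set.range ιK ∩ Set.range ιH = U
  edgeEquiv : G.E ≃ K.E ⊕ H.E
  endsK : ∀ a, G.ends (edgeEquiv.symm (Sum.inl a)) = (K.ends a).map ιK
  endsH : ∀ a, G.ends (edgeEquiv.symm (Sum.inr a)) = (H.ends a).map ιH

namespace NSum

variable {G K H : Multigraph} {U : Set G.V}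

/-- The copy of a partition `A` of `U` on the corresponding subset of `V(K)`. -/
def pullK (σ : NSum G K H U) (A : Setoid U) : Setoid (σ.ιK ⁻¹' U : Set K.V) :=
  Setoid.comap (fun v => ⟨σ.ιK v.1, v.2⟩) A

/-- The copy of a partition `A` of `U` on the corresponding subset of `V(H)`. -/
def pullH (σ : NSum G K H U) (A : Setoid U) : Setoid (σ.ιH ⁻¹' U : Set H.V) :=
  Setoid.comap (fun v => ⟨σ.ιH v.1, v.2⟩) A

/-- The contraction `K/A` for a partition `A` of the common vertex set `U`. -/
noncomputable def contractK (σ : NSum G K H U) (A : Setoid U) : Multigraph :=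
  K.contract (σ.pullK A)

/-- The contraction `H/B` for a partition `B` of the common vertex set `U`. -/
noncomputable def contractH (σ : NSum G K H U) (B : Setoid U) : Multigraph :=
  H.contract (σ.pullH B)

end NSum

/-!
On the hyperbola `(x - 1)(y - 1) = 1` we have `x - 1 = (y - 1)⁻¹`, so the `ω(S)` in the two
exponents of the Tutte expansion cancel: the term of `S` is `(y - 1)^|S| (y - 1)^(ω(G) - |V|)`,
and summing over `S` gives `T(G; x, y) = y^|E| (y - 1)^(ω(G) - |V|)`. Both identities thus
reduce to counting: the 2-sum of connected graphs is connected with `|E(G)| = |E(K)| + |E(H)|`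
and `|V(G)| = |V(K)| + |V(H)| - 2`, and contracting the two vertices of `U` to one keeps a graph
connected and removes exactly one vertex.
-/

open Relation

lemma Relation.card_quotient_eqvGen_le_add_one {α : Type*} [Finite α]
    {r r' : α → α → Prop} (a b : α) (hle : ∀ x y, r x y → r' x y)
    (hr' : ∀ x y, r' x y → r x y ∨ s(x, y) = s(a, b)) :
    Nat.card (Quotient (EqvGen.setoid r)) ≤ Nat.card (Quotient (EqvGen.setoid r')) + 1 := by
  set s := EqvGen.setoid r
  set s' := EqvGen.setoid r'
  -- merging the class of `b` into that of `a` is constant on the classes of `s'`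
  let merge : Quotient s → Quotient s := fun q => if q = ⟦b⟧ then ⟦a⟧ else q
  have hmerge : s' ≤ Setoid.ker (merge ∘ Quotient.mk s) := Setoid.eqvGen_le fun x y hxy => by
    rcases hr' x y hxy with hxy | hab
    · exact congrArg merge (Quotient.sound (EqvGen.rel _ _ hxy))
    · rcases Sym2.eq_iff.mp hab with ⟨rfl, rfl⟩ | ⟨rfl, rfl⟩ <;> simp [merge]
  let back : Quotient s' → Quotient s :=
    Quotient.lift (merge ∘ Quotient.mk s) fun _ _ h => hmerge h
  let fwd : Quotient s → Quotient s' := Quotient.map' id (Setoid.eqvGen_mono hle)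
  have hback : ∀ q, q ≠ ⟦b⟧ → back (fwd q) = q := by
    refine Quotient.ind fun x hx => ?_
    simp [back, fwd, merge, hx]
  have hinj : Function.Injective fun q : ({⟦b⟧}ᶜ : Set (Quotient s)) => fwd q := by
    intro p q hpq
    exact Subtype.ext ((hback p p.2).symm.trans ((congrArg back hpq).trans (hback q q.2)))
  calc Nat.card (Quotient s)
      = Nat.card ({⟦b⟧}ᶜ : Set (Quotient s)) + 1 := by
        rw [← Set.ncard_add_ncard_compl {⟦b⟧}, Nat.card_coe_set_eq, Set.ncard_singleton,
          add_comm]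
    _ ≤ Nat.card (Quotient s') + 1 := by
        gcongr
        exact Nat.card_le_card_of_injective _ hinj

namespace Multigraph

variable (G : Multigraph)

lemma omega_anti {S T : Finset G.E} (h : S ⊆ T) : G.omega T ≤ G.omega S :=
  Nat.card_le_card_of_surjective
    (Quotient.map' id (Setoid.eqvGen_mono fun _ _ ⟨e, he, hends⟩ => ⟨e, h he, hends⟩))
    (Quotient.ind fun v => ⟨Quotient.mk _ v, rfl⟩)

lemma omegaG_le_omega (S : Finset G.E) : G.omegaG ≤ G.omega S :=
  G.omega_anti (Finset.subset_univ S)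

lemma omega_le_omega_insert_add_one (S : Finset G.E) (e : G.E) :
    G.omega S ≤ G.omega (insert e S) + 1 := by
  obtain ⟨a, b, h⟩ : ∃ a b, G.ends e = s(a, b) :=
    Sym2.ind (fun a b => ⟨a, b, rfl⟩) (G.ends e)
  refine Relation.card_quotient_eqvGen_le_add_one a b
    (fun _ _ ⟨f, hf, hends⟩ => ⟨f, Finset.mem_insert_of_mem hf, hends⟩) ?_
  rintro x y ⟨f, hf, hends⟩
  rcases Finset.mem_insert.mp hf with rfl | hf
  · exact Or.inr (hends.symm.trans h)
  · exact Or.inl ⟨f, hf, hends⟩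

lemma card_V_le_omega_add_card (S : Finset G.E) : Fintype.card G.V ≤ G.omega S + S.card := by
  induction S using Finset.induction_on with
  | empty =>
    rw [← Nat.card_eq_fintype_card, Finset.card_empty, add_zero]
    refine Nat.card_le_card_of_injective (Quotient.mk _) fun v w hvw => ?_
    exact (Setoid.eqvGen_le (s := ⊥) fun _ _ ⟨_, he, _⟩ => absurd he (Finset.notMem_empty _))
      (Quotient.exact hvw)
  | insert e S he ih =>
    rw [Finset.card_insert_of_notMem he]
    have := G.omega_le_omega_insert_add_one S e
    omega

lemma tutte_eq_of_mul_eq_one {x y : ℝ} (hxy : (x - 1) * (y - 1) = 1) :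
    G.tutte x y = y ^ Fintype.card G.E * (y - 1) ^ ((G.omegaG : ℤ) - Fintype.card G.V) := by
  have hy : y - 1 ≠ 0 := right_ne_zero_of_mul_eq_one hxy
  have hx : x - 1 = (y - 1)⁻¹ := eq_inv_of_mul_eq_one_left hxy
  have hterm : ∀ S : Finset G.E,
      (x - 1) ^ (G.omega S - G.omegaG) * (y - 1) ^ (G.omega S + S.card - Fintype.card G.V) =
        (y - 1) ^ S.card * (y - 1) ^ ((G.omegaG : ℤ) - Fintype.card G.V) := by
    intro S
    have := G.omegaG_le_omega S
    have := G.card_V_le_omega_add_card S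
    rw [hx, inv_pow, ← zpow_natCast, ← zpow_natCast, ← zpow_natCast, ← zpow_neg,
      ← zpow_add₀ hy, ← zpow_add₀ hy]
    congr 1
    omega
  have hsum : ∑ S : Finset G.E, (y - 1) ^ S.card = y ^ Fintype.card G.E := by
    simpa using Fintype.sum_pow_mul_eq_add_pow G.E (y - 1) 1
  simp only [tutte, hterm, ← Finset.sum_mul, hsum]

lemma omegaG_eq_one_iff :
    G.omegaG = 1 ↔ Nonempty G.V ∧ ∀ v w : G.V, EqvGen (G.rel Finset.univ) v w := by
  rw [omegaG, omega, Nat.card_eq_one_iff_unique, Quotient.subsingleton_iff, Setoid.eq_top_iff,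
    nonempty_quotient_iff]
  exact and_comm

lemma eqvGen_rel_univ_map {K L : Multigraph} (f : K.V → L.V) (φ : K.E → L.E)
    (hf : ∀ e, L.ends (φ e) = (K.ends e).map f) {v w : K.V}
    (h : EqvGen (K.rel Finset.univ) v w) : EqvGen (L.rel Finset.univ) (f v) (f w) :=
  Setoid.eqvGen_le (s := (EqvGen.setoid (L.rel Finset.univ)).comap f)
    (fun _ _ ⟨e, _, he⟩ =>
      EqvGen.rel _ _ ⟨φ e, Finset.mem_univ _, by rw [hf, he, Sym2.map_mk]⟩) h

lemma omegaG_eq_one_of_surjective {K L : Multigraph} (f : K.V → L.V) (φ : K.E → L.E)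
    (hf : ∀ e, L.ends (φ e) = (K.ends e).map f) (hsurj : Function.Surjective f)
    (hK : K.omegaG = 1) : L.omegaG = 1 := by
  obtain ⟨⟨v₀⟩, hconn⟩ := K.omegaG_eq_one_iff.mp hK
  refine L.omegaG_eq_one_iff.mpr ⟨⟨f v₀⟩, hsurj.forall₂.mpr fun v w => ?_⟩
  exact eqvGen_rel_univ_map f φ hf (hconn v w)

lemma omegaG_contract_eq_one {K : Multigraph} {W : Set K.V} (A : Setoid W) (hK : K.omegaG = 1) :
    (K.contract A).omegaG = 1 :=
  omegaG_eq_one_of_surjective (Quotient.mk _) id (fun _ => rfl) Quotient.mk_surjective hK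

lemma card_V_contract_top_add_ncard {K : Multigraph} {W : Set K.V} (hW : W.Nonempty) :
    Fintype.card (K.contract (⊤ : Setoid W)).V + W.ncard = Fintype.card K.V + 1 := by
  obtain ⟨w₀, hw₀⟩ := hW
  let f : Option (Wᶜ : Set K.V) → (K.contract (⊤ : Setoid W)).V :=
    fun o => Quotient.mk _ (o.elim w₀ Subtype.val)
  have hf : Function.Bijective f := by
    constructor
    · rintro (_ | ⟨v, hv⟩) (_ | ⟨w, hw⟩) h <;>
        simp only [f, Option.elim_none, Option.elim_some] at h
      · rfl
      · rcases Quotient.exact h with rfl | ⟨-, hw', -⟩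
        exacts [absurd hw₀ hw, absurd hw' hw]
      · rcases Quotient.exact h with rfl | ⟨hv', -, -⟩
        exacts [absurd hw₀ hv, absurd hv' hv]
      · rcases Quotient.exact h with rfl | ⟨hv', -, -⟩
        exacts [rfl, absurd hv' hv]
    · refine Quotient.ind fun v => ?_
      by_cases hv : v ∈ W
      · exact ⟨none, Quotient.sound (Or.inr ⟨hw₀, hv, trivial⟩)⟩
      · exact ⟨some ⟨v, hv⟩, rfl⟩
  rw [← Nat.card_eq_fintype_card, ← Nat.card_eq_fintype_card, ← Nat.card_eq_of_bijective f hf,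
    Finite.card_option, ← Set.ncard_add_ncard_compl W, Nat.card_coe_set_eq]
  ring

end Multigraph

namespace NSum

variable {G K H : Multigraph} {U : Set G.V}

def symm (σ : NSum G K H U) : NSum G H K U where
  ιK := σ.ιH
  ιH := σ.ιK
  injK := σ.injH
  injH := σ.injK
  cover := Set.union_comm _ _ ▸ σ.cover
  inter := Set.inter_comm _ _ ▸ σ.inter
  edgeEquiv := σ.edgeEquiv.trans (Equiv.sumComm _ _)
  endsK := σ.endsH
  endsH := σ.endsK

lemma card_E (σ : NSum G K H U) : Fintype.card G.E = Fintype.card K.E + Fintype.card H.E := by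
  rw [Fintype.card_congr σ.edgeEquiv, Fintype.card_sum]

lemma card_V_add_ncard (σ : NSum G K H U) :
    Fintype.card G.V + U.ncard = Fintype.card K.V + Fintype.card H.V := by
  have h := Set.ncard_union_add_ncard_inter (Set.range σ.ιK) (Set.range σ.ιH)
  rw [σ.cover, σ.inter, Set.ncard_univ, Set.ncard_range_of_injective σ.injK,
    Set.ncard_range_of_injective σ.injH] at h
  simpa only [Nat.card_eq_fintype_card] using h

lemma ncard_preimage_ιK (σ : NSum G K H U) : (σ.ιK ⁻¹' U).ncard = U.ncard :=
  Set.ncard_preimage_of_injective_subset_range σ.injK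
    (σ.inter.symm.subset.trans Set.inter_subset_left)

lemma omegaG_eq_one (σ : NSum G K H U) (hU : U.Nonempty) (hK : K.omegaG = 1)
    (hH : H.omegaG = 1) : G.omegaG = 1 := by
  obtain ⟨u, hu⟩ := hU
  obtain ⟨⟨k, rfl⟩, ⟨h, hh⟩⟩ : u ∈ Set.range σ.ιK ∩ Set.range σ.ιH :=
    σ.inter.symm.subset hu
  obtain ⟨-, hconnK⟩ := K.omegaG_eq_one_iff.mp hK
  obtain ⟨-, hconnH⟩ := H.omegaG_eq_one_iff.mp hH
  have hto : ∀ v, EqvGen (G.rel Finset.univ) v (σ.ιK k) := by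
    intro v
    rcases σ.cover.symm ▸ Set.mem_univ v with ⟨v, rfl⟩ | ⟨v, rfl⟩
    · exact Multigraph.eqvGen_rel_univ_map σ.ιK _ σ.endsK (hconnK v k)
    · exact hh ▸ Multigraph.eqvGen_rel_univ_map σ.ιH _ σ.endsH (hconnH v h)
  exact G.omegaG_eq_one_iff.mpr ⟨⟨σ.ιK k⟩, fun v w => (hto v).trans _ _ _ (hto w).symm⟩

lemma card_V_contractK_top_add_ncard (σ : NSum G K H U) (hU : U.Nonempty) :
    Fintype.card (σ.contractK ⊤).V + U.ncard = Fintype.card K.V + 1 := by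
  have hpull : σ.pullK ⊤ = ⊤ := Setoid.ext fun _ _ => Iff.rfl
  obtain ⟨u, hu⟩ := hU
  obtain ⟨k, rfl⟩ : u ∈ Set.range σ.ιK := (σ.inter.symm.subset hu).1
  rw [← σ.ncard_preimage_ιK, contractK, hpull]
  exact Multigraph.card_V_contract_top_add_ncard ⟨k, hu⟩

end NSum

/-- the two splittings of the Tutte polynomial of a `2`-sum of
connected multigraphs on the curve `(x−1)(y−1) = 1`. -/
theorem two_sum_splitting_on_hyperbola
    (G K H : Multigraph) (U : Set G.V) (sg : NSum G K H U)
    (hU : Nat.card ↥U = 2) (hK : K.omegaG = 1) (hH : H.omegaG = 1)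
    (x y : ℝ) (hxy : (x - 1) * (y - 1) = 1) :
    G.tutte x y = (y - 1) * K.tutte x y * H.tutte x y ∧
    G.tutte x y = (x - 1) * (sg.contractK ⊤).tutte x y * (sg.contractH ⊤).tutte x y := by
  have hy : y - 1 ≠ 0 := right_ne_zero_of_mul_eq_one hxy
  have hU' : U.ncard = 2 := hU
  have hUne : U.Nonempty := Set.nonempty_of_ncard_ne_zero (by omega)
  have hV := sg.card_V_add_ncard
  have hVK := sg.card_V_contractK_top_add_ncard hUne
  have hVH : Fintype.card (sg.contractH ⊤).V + U.ncard = Fintype.card H.V + 1 :=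
    sg.symm.card_V_contractK_top_add_ncard hUne
  have hKc : (sg.contractK ⊤).omegaG = 1 := Multigraph.omegaG_contract_eq_one _ hK
  have hHc : (sg.contractH ⊤).omegaG = 1 := Multigraph.omegaG_contract_eq_one _ hH
  have hEK : Fintype.card (sg.contractK ⊤).E = Fintype.card K.E := rfl
  have hEH : Fintype.card (sg.contractH ⊤).E = Fintype.card H.E := rfl
  simp only [Multigraph.tutte_eq_of_mul_eq_one _ hxy, sg.omegaG_eq_one hUne hK hH, hK, hH,
    hKc, hHc, Nat.cast_one, sg.card_E, hEK, hEH, pow_add]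
  constructor
  · have hexp : (1 : ℤ) - Fintype.card G.V =
        1 + (1 - Fintype.card K.V) + (1 - Fintype.card H.V) := by omega
    rw [hexp, zpow_add₀ hy, zpow_add₀ hy, zpow_one]
    ring
  · have hexp : (1 : ℤ) - Fintype.card G.V =
        -1 + (1 - Fintype.card (sg.contractK ⊤).V) + (1 - Fintype.card (sg.contractH ⊤).V) := by
      omega
    rw [eq_inv_of_mul_eq_one_left hxy, hexp, zpow_add₀ hy, zpow_add₀ hy, zpow_neg_one]
    ring
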